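/- Let r = (r₁,…,rₙ) ∈ ℕⁿ with each r_i ≥ 3 odd, and let C_r ⊆ B[0,1] = [−1,1]ⁿ be the r-self-affine Sierpiński carpet: the attractor (unique nonempty compact set K with K = ⋃_f f(K)) of the iterated function system consisting of the ∏_i r_i − 1 affine contractions mapping [−1,1]ⁿ onto the closed boxes of side length 2/r_i along the i-th axis obtained by subdividing [−1,1]ⁿ into a ∏_i r_i grid and omitting the central box. Let t ∈ (0,1) and let A be the diagonal n×n matrix with diagonal entries (1/r_j)^t for j = 1,…,n. Then, in the sup metric, τ_A(C_r) = t^{−1}·min_{1≤i≤n} log_{r_i}((r_i − 1)/2). -/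

import Mathlib

open Metric Set Topology Filter
open scoped ENNReal Classical

noncomputable section

/-- The affine box `A^s(B[0,1]) + z`, where `A` is the diagonal matrix with
diagonal entries `β j`, so `A^s(B[0,1]) + z = {x : |x j - z j| ≤ (β j)^s for all j}`. -/
def affBox {n : ℕ} (β : Fin n → ℝ) (s : ℝ) (z : Fin n → ℝ) : Set (Fin n → ℝ) :=
  {x | ∀ j, |x j - z j| ≤ (β j) ^ s}

/-- The size `S_A(F)` of `F` with respect to the diagonal matrix with entries `β`. -/
def sizeWrt {n : ℕ} (β : Fin n → ℝ) (F : Set (Fin n → ℝ)) : ℝ :=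
  sInf {t | 0 < t ∧ ∃ z, F ⊆ affBox β (1 / t) z}

/-- `G` is a gap (a connected component of the complement) of `C`. -/
def IsGap {n : ℕ} (C G : Set (Fin n → ℝ)) : Prop :=
  ∃ x ∈ Cᶜ, G = connectedComponentIn Cᶜ x

/-- `G` is a bounded gap of `C`. -/
def IsBoundedGap {n : ℕ} (C G : Set (Fin n → ℝ)) : Prop :=
  IsGap C G ∧ Bornology.IsBounded G

/-- The unbounded gap `E` of `C`: the union of the unbounded connected
components of the complement of `C`. -/
def unboundedGap {n : ℕ} (C : Set (Fin n → ℝ)) : Set (Fin n → ℝ) :=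
  {x | x ∈ Cᶜ ∧ ¬ Bornology.IsBounded (connectedComponentIn Cᶜ x)}

/-- An enumeration `(G_k)_{k ∈ J}` of the bounded gaps of `C`, in non-increasing
order of size with respect to `β`. -/
structure GapEnum {n : ℕ} (β : Fin n → ℝ) (C : Set (Fin n → ℝ)) where
  J : Set ℕ
  G : ℕ → Set (Fin n → ℝ)
  downward : ∀ k l : ℕ, k ≤ l → l ∈ J → k ∈ J
  isGap : ∀ k ∈ J, IsBoundedGap C (G k)
  inj : ∀ k ∈ J, ∀ l ∈ J, G k = G l → k = l
  surj : ∀ G', IsBoundedGap C G' → ∃ k ∈ J, G k = G'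
  anti : ∀ k ∈ J, ∀ l ∈ J, k ≤ l → sizeWrt β (G l) ≤ sizeWrt β (G k)

/-- The gap distance `GD_A(m, C)` with respect to the enumeration `e`. -/
def gapDist {n : ℕ} (β : Fin n → ℝ) (C : Set (Fin n → ℝ)) (e : GapEnum β C) (m : ℕ) : ℝ :=
  sInf {t | 0 < t ∧ ∃ z, (affBox β (1 / t) z ∩ e.G m).Nonempty ∧
    (affBox β (1 / t) z ∩ ((⋃ i ∈ e.J ∩ Iio m, e.G i) ∪ unboundedGap C)).Nonempty}

/-- Extended-real-valued inverse, with `0⁻¹ = ∞`. -/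
def invE (s : ℝ) : EReal := if s = 0 then ⊤ else ((s⁻¹ : ℝ) : EReal)

/-- Affine thickness `τ_A(C)` of `C` with respect to the diagonal matrix with entries `β`,
computed from the enumeration `e` of the bounded gaps of `C`. -/
def thicknessA {n : ℕ} (β : Fin n → ℝ) (C : Set (Fin n → ℝ)) (e : GapEnum β C) : EReal :=
  if e.J = ∅ then (if (interior C).Nonempty then ⊤ else ⊥)
  else if ∃ k ∈ e.J, gapDist β C e k = 0 then ⊥
  else ⨅ k ∈ e.J, (invE (sizeWrt β (e.G k)) - invE (gapDist β C e k))

/-- Open sets `U`, `V` are linked. -/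
def Linked {n : ℕ} (U V : Set (Fin n → ℝ)) : Prop :=
  (U ∩ V).Nonempty ∧ (frontier U \ V).Nonempty ∧ (frontier V \ U).Nonempty

/-- Compact sets `C₁`, `C₂` are BG linked. -/
def BGLinked {n : ℕ} (C₁ C₂ : Set (Fin n → ℝ)) : Prop :=
  ∀ G₁ G₂, IsBoundedGap C₁ G₁ → IsBoundedGap C₂ G₂ → Linked G₁ G₂ ∨ G₁ ∩ G₂ = ∅

/-- `C₁, C₂ ⊆ B[0,1]` are a strongly refinable pair for the diagonal matrix with entries `β`. -/
def StronglyRefinable {n : ℕ} (β : Fin n → ℝ) (C₁ C₂ : Set (Fin n → ℝ)) : Prop :=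
  ∃ C₁' C₂' : Set (Fin n → ℝ), IsCompact C₁' ∧ IsCompact C₂' ∧
    C₁' ⊆ closedBall 0 1 ∧ C₂' ⊆ closedBall 0 1 ∧
    BGLinked C₁' C₂' ∧
    (∃ G₁, IsBoundedGap C₁' G₁ ∧ ¬ frontier G₁ ⊆ unboundedGap C₂') ∧
    (∃ G₂, IsBoundedGap C₂' G₂ ∧ ¬ frontier G₂ ⊆ unboundedGap C₁') ∧
    (∀ e₁ : GapEnum β C₁, ∀ e₂ : GapEnum β C₂, ∃ e₁' : GapEnum β C₁', ∃ e₂' : GapEnum β C₂',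
      thicknessA β C₁ e₁ + thicknessA β C₂ e₂ ≤ thicknessA β C₁' e₁' + thicknessA β C₂' e₂') ∧
    C₁' ∩ C₂' ⊆ C₁ ∩ C₂

/-- The distance between two sets. -/
def setDist {n : ℕ} (A B : Set (Fin n → ℝ)) : ℝ :=
  sInf {r | ∃ a ∈ A, ∃ b ∈ B, r = dist a b}

/-- An enumeration of the bounded gaps of `C` in non-increasing order of diameter. -/
structure DiamEnum {n : ℕ} (C : Set (Fin n → ℝ)) where
  J : Set ℕ
  G : ℕ → Set (Fin n → ℝ)
  downward : ∀ k l : ℕ, k ≤ l → l ∈ J → k ∈ J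
  isGap : ∀ k ∈ J, IsBoundedGap C (G k)
  inj : ∀ k ∈ J, ∀ l ∈ J, G k = G l → k = l
  surj : ∀ G', IsBoundedGap C G' → ∃ k ∈ J, G k = G'
  anti : ∀ k ∈ J, ∀ l ∈ J, k ≤ l → Metric.diam (G l) ≤ Metric.diam (G k)

/-- The Falconer–Yavicoli thickness `τ(C)`, computed from the enumeration `e` of
the bounded gaps of `C` in non-increasing order of diameter. -/
def FYthickness {n : ℕ} (C : Set (Fin n → ℝ)) (e : DiamEnum C) : ℝ≥0∞ :=
  if e.J = ∅ then (if (interior C).Nonempty then ⊤ else 0)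
  else ⨅ k ∈ e.J, ENNReal.ofReal
    (setDist (e.G k) (unboundedGap C ∪ ⋃ j ∈ e.J ∩ Iio k, e.G j) / Metric.diam (e.G k))

end

/-!
The bounded gaps of the carpet are exactly the open central subcells
`openBox c (radius r (σ + 1))` of the level-`σ` cells, of size `t / (σ + 1)`. A box meeting such a
gap and an earlier gap or the unbounded gap has to leave the enclosing level-`σ` cell, so in some
direction `i` it bridges the distance `r i ^ (-σ) - r i ^ (-(σ + 1))` between the faces of the
cell and of the gap; this forces its scale to be at least `t / (σ + 1 - m)`. For the central gap
of `B[0,1]`, a box in a direction attaining `m` shows that this bound is sharp. Hence every term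
of the infimum defining the thickness is at least `m / t`, with equality at the central gap.
-/

noncomputable section

namespace SierpinskiCarpet

variable {n : ℕ}

def box (c ρ : Fin n → ℝ) : Set (Fin n → ℝ) := {x | ∀ i, |x i - c i| ≤ ρ i}

def openBox (c ρ : Fin n → ℝ) : Set (Fin n → ℝ) := {x | ∀ i, |x i - c i| < ρ i}

section Boxes

variable {c z ρ δ : Fin n → ℝ}

lemma box_eq_pi (c ρ : Fin n → ℝ) : box c ρ = univ.pi fun i => closedBall (c i) (ρ i) := by
  ext x; simp [box, Real.dist_eq]

lemma openBox_eq_pi (c ρ : Fin n → ℝ) : openBox c ρ = univ.pi fun i => ball (c i) (ρ i) := by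
  ext x; simp [openBox, Real.dist_eq]

lemma isClosed_box : IsClosed (box c ρ) :=
  box_eq_pi c ρ ▸ isClosed_set_pi fun _ _ => isClosed_closedBall

lemma isOpen_openBox : IsOpen (openBox c ρ) :=
  openBox_eq_pi c ρ ▸ isOpen_set_pi finite_univ fun _ _ => isOpen_ball

lemma isPreconnected_openBox : IsPreconnected (openBox c ρ) := by
  rw [openBox_eq_pi]
  exact (convex_pi fun _ _ => convex_ball _ _).isPreconnected

lemma openBox_subset_box_of_le (h : ρ ≤ δ) : openBox c ρ ⊆ box c δ :=
  fun _ hx i => (hx i).le.trans (h i)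

lemma center_mem_openBox (hρ : ∀ i, 0 < ρ i) : c ∈ openBox c ρ := fun i => by simpa using hρ i

lemma closure_openBox (hρ : ∀ i, 0 < ρ i) : closure (openBox c ρ) = box c ρ := by
  simp only [openBox_eq_pi, closure_pi_set, box_eq_pi, closure_ball _ (hρ _).ne']

lemma frontier_openBox (hρ : ∀ i, 0 < ρ i) : frontier (openBox c ρ) = box c ρ \ openBox c ρ := by
  rw [frontier, closure_openBox hρ, isOpen_openBox.interior_eq]

lemma box_zero_one : box (0 : Fin n → ℝ) 1 = closedBall 0 1 := by
  ext x
  simp [box, pi_norm_le_iff_of_nonneg zero_le_one, Real.norm_eq_abs]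

lemma abs_sub_add_le_of_box_subset (hρ : ∀ j, 0 ≤ ρ j) (h : box c ρ ⊆ box z δ) (i : Fin n) :
    |c i - z i| + ρ i ≤ δ i := by
  have hmem : ∀ a, |a| ≤ ρ i → Function.update c i (c i + a) ∈ box c ρ := by
    intro a ha j
    rcases eq_or_ne j i with rfl | hj
    · simpa using ha
    · simpa [Function.update_of_ne hj] using hρ j
  have h₁ := h (hmem (ρ i) (abs_of_nonneg (hρ i)).le) i
  have h₂ := h (hmem (-ρ i) (by rw [abs_neg, abs_of_nonneg (hρ i)])) i
  simp only [Function.update_self] at h₁ h₂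
  cases abs_le.1 h₁; cases abs_le.1 h₂; cases abs_cases (c i - z i) <;> linarith

lemma le_of_openBox_subset_box (hρ : ∀ i, 0 < ρ i) (h : openBox c ρ ⊆ box z δ) (i : Fin n) :
    ρ i ≤ δ i := by
  have : box c ρ ⊆ box z δ := closure_openBox hρ ▸ closure_minimal h isClosed_box
  linarith [abs_sub_add_le_of_box_subset (fun j => (hρ j).le) this i, abs_nonneg (c i - z i)]

lemma exists_box_mem_update {i : Fin n} {a b : ℝ} (hδ : ∀ j, 0 ≤ δ j) (h : |a - b| ≤ 2 * δ i) :
    ∃ z, Function.update c i a ∈ box z δ ∧ Function.update c i b ∈ box z δ := by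
  refine ⟨Function.update c i ((a + b) / 2), fun j => ?_, fun j => ?_⟩ <;>
    rcases eq_or_ne j i with rfl | hj
  · rw [Function.update_self, Function.update_self, show a - (a + b) / 2 = (a - b) / 2 by ring,
      abs_div, abs_two]; linarith
  · simp [Function.update_of_ne hj, hδ j]
  · rw [Function.update_self, Function.update_self, show b - (a + b) / 2 = -((a - b) / 2) by ring,
      abs_neg, abs_div, abs_two]; linarith
  · simp [Function.update_of_ne hj, hδ j]

lemma exists_lt_two_mul_of_mem_box {ρ' : Fin n → ℝ} {x y : Fin n → ℝ} (hx : x ∈ openBox c ρ')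
    (hy : y ∉ box c ρ) (hxz : x ∈ box z δ) (hyz : y ∈ box z δ) : ∃ i, ρ i - ρ' i < 2 * δ i := by
  obtain ⟨i, hi⟩ : ∃ i, ρ i < |y i - c i| := by simpa [box] using hy
  refine ⟨i, ?_⟩
  have := hx i; have := hxz i; have := hyz i
  have := abs_sub_le (y i) (z i) (c i); have := abs_sub_le (z i) (x i) (c i)
  rw [abs_sub_comm (z i) (x i)] at this
  linarith

end Boxes


/-- Real exponents let one scale serve both the level-`σ` cells, of half-widths `radius r σ`,
and the boxes `A^s(B[0,1]) + z = box z (radius r (t * s))`. -/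
def radius (r : Fin n → ℕ) (a : ℝ) : Fin n → ℝ := fun i => (r i : ℝ) ^ (-a)

section Radius

variable {r : Fin n → ℕ} {i : Fin n}

lemma radius_pos (hr : 1 < r i) (a : ℝ) : 0 < radius r a i :=
  Real.rpow_pos_of_pos (by positivity) _

lemma radius_le_radius_iff (hr : 1 < r i) {a b : ℝ} : radius r a i ≤ radius r b i ↔ b ≤ a := by
  rw [radius, radius, Real.rpow_le_rpow_left_iff (by exact_mod_cast hr), neg_le_neg_iff]

lemma radius_lt_radius_iff (hr : 1 < r i) {a b : ℝ} : radius r a i < radius r b i ↔ b < a := by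
  rw [radius, radius, Real.rpow_lt_rpow_left_iff (by exact_mod_cast hr), neg_lt_neg_iff]

@[simp] lemma radius_zero : radius r 0 = 1 := by
  ext i; simp [radius]

lemma radius_add (hr : 1 < r i) (a b : ℝ) : radius r (a + b) i = radius r a i * radius r b i := by
  rw [radius, radius, radius, neg_add, Real.rpow_add (by positivity)]

lemma radius_eq_mul_radius_add_one (hr : 1 < r i) (a : ℝ) :
    radius r a i = r i * radius r (a + 1) i := by
  have : (r i : ℝ) ≠ 0 := by positivity
  rw [radius_add hr, show radius r 1 i = (r i : ℝ)⁻¹ from Real.rpow_neg_one _]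
  field_simp

lemma radius_lt_radius_add_one (hr : 1 < r i) (a : ℝ) : radius r (a + 1) i < radius r a i :=
  (radius_lt_radius_iff hr).2 (lt_add_one a)

/-- This is where `log_{r i} ((r i - 1) / 2)` enters: it measures the gap between the faces of a
cell and of its central subcell. -/
lemma radius_sub_radius_add_one (hr : 1 < r i) (a : ℝ) :
    radius r a i - radius r (a + 1) i =
      2 * radius r (a + 1 - Real.logb (r i) (((r i : ℝ) - 1) / 2)) i := by
  have hr' : (1 : ℝ) < r i := by exact_mod_cast hr
  set ℓ := Real.logb (r i) (((r i : ℝ) - 1) / 2)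
  have hℓ : radius r (-ℓ) i = ((r i : ℝ) - 1) / 2 := by
    rw [radius, neg_neg, Real.rpow_logb (by linarith) hr'.ne' (by linarith)]
  rw [show a + 1 - ℓ = (a + 1) + -ℓ by ring, radius_add hr (a + 1), hℓ,
    radius_eq_mul_radius_add_one hr a]
  ring

lemma affBox_eq_box {t : ℝ} {β : Fin n → ℝ} (hβ : β = fun j => ((r j : ℝ)⁻¹) ^ t) (s : ℝ)
    (z : Fin n → ℝ) : affBox β s z = box z (radius r (t * s)) := by
  subst hβ
  ext x
  simp only [affBox, box, radius]
  refine forall_congr' fun j => ?_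
  rw [← Real.rpow_mul (by positivity), Real.inv_rpow (by positivity), Real.rpow_neg (by positivity)]

lemma sizeWrt_openBox [Nonempty (Fin n)] (hr : ∀ i, 1 < r i) {t : ℝ} (ht : 0 < t)
    {β : Fin n → ℝ} (hβ : β = fun j => ((r j : ℝ)⁻¹) ^ t) {a : ℝ} (ha : 0 < a) (c : Fin n → ℝ) :
    sizeWrt β (openBox c (radius r a)) = t / a := by
  have key : ∀ s, 0 < s → ((∃ z, openBox c (radius r a) ⊆ affBox β (1 / s) z) ↔ t / a ≤ s) := by
    intro s hs
    simp_rw [affBox_eq_box hβ, div_le_iff₀ ha, mul_one_div, ← div_le_iff₀' hs]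
    constructor
    · rintro ⟨z, hz⟩
      let i : Fin n := Classical.arbitrary _
      exact (radius_le_radius_iff (hr i)).1
        (le_of_openBox_subset_box (fun i => radius_pos (hr i) a) hz i)
    · exact fun h => ⟨c, openBox_subset_box_of_le fun i => (radius_le_radius_iff (hr i)).2 h⟩
  have hset : {s | 0 < s ∧ ∃ z, openBox c (radius r a) ⊆ affBox β (1 / s) z} = Ici (t / a) := by
    ext s
    refine ⟨fun ⟨hs, h⟩ => (key s hs).1 h, fun h => ?_⟩
    have hs : 0 < s := (div_pos ht ha).trans_le h
    exact ⟨hs, (key s hs).2 h⟩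
  rw [sizeWrt, hset, csInf_Ici]

end Radius

lemma exists_digit {b : ℕ} (hb : 3 ≤ b) (hodd : Odd b) {v : ℝ} (hv : |v| ≤ b) :
    ∃ g : ℕ, (1 ≤ g ∧ g ≤ b) ∧ (1 ≤ |v| → g ≠ (b + 1) / 2) ∧ |v - (2 * g - b - 1)| ≤ 1 := by
  obtain ⟨k, rfl⟩ := hodd
  have hk : 1 ≤ k := by omega
  have hcenter : (2 * k + 1 + 1) / 2 = k + 1 := by omega
  have near : ∀ w : ℝ, 1 ≤ w → w ≤ 2 * k + 1 → ∃ d : ℕ, 1 ≤ d ∧ d ≤ k ∧ |w - 2 * d| ≤ 1 := by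
    intro w hw₁ hw₂
    refine ⟨max 1 ⌈(w - 1) / 2⌉₊, le_max_left _ _, max_le hk (Nat.ceil_le.2 (by linarith)), ?_⟩
    rcases le_total ⌈(w - 1) / 2⌉₊ 1 with h | h
    · have := Nat.ceil_le.1 h
      rw [max_eq_left h, abs_le]; push_cast; constructor <;> linarith
    · have := Nat.le_ceil ((w - 1) / 2)
      have := Nat.ceil_lt_add_one (show 0 ≤ (w - 1) / 2 by linarith)
      rw [max_eq_right h, abs_le]; constructor <;> linarith
  push_cast at hv ⊢
  rcases lt_or_ge |v| 1 with hv₁ | hv₁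
  · exact ⟨k + 1, by omega, fun h => absurd h hv₁.not_ge, by push_cast; ring_nf; exact hv₁.le⟩
  rcases le_or_gt 0 v with h₀ | h₀
  · rw [abs_of_nonneg h₀] at hv hv₁
    obtain ⟨d, hd₁, hdk, hd⟩ := near v hv₁ hv
    exact ⟨k + 1 + d, by omega, fun _ => by omega, by push_cast; ring_nf at hd ⊢; exact hd⟩
  · rw [abs_of_neg h₀] at hv hv₁
    obtain ⟨d, hd₁, hdk, hd⟩ := near (-v) hv₁ hv
    have hg : ((k + 1 - d : ℕ) : ℝ) = k + 1 - d := by rw [Nat.cast_sub (by omega)]; push_cast; ring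
    refine ⟨k + 1 - d, by omega, fun _ => by omega, ?_⟩
    rw [hg, ← abs_neg]; ring_nf at hd ⊢; exact hd

def digits (r : Fin n → ℕ) : Set (Fin n → ℕ) :=
  {j | (∀ i, 1 ≤ j i ∧ j i ≤ r i) ∧ j ≠ fun i => (r i + 1) / 2}

def carpetMap (r : Fin n → ℕ) (j : Fin n → ℕ) (x : Fin n → ℝ) : Fin n → ℝ :=
  fun i => (x i + 2 * (j i : ℝ) - (r i : ℝ) - 1) / (r i : ℝ)

def offset (r : Fin n → ℕ) (a : ℝ) (j : Fin n → ℕ) : Fin n → ℝ :=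
  fun i => (2 * (j i : ℝ) - r i - 1) * radius r a i

/-- The level-`σ` cells are the boxes `box c (radius r σ)`, `c ∈ centers r σ`, i.e. the images
of `B[0,1]` under the `σ`-fold compositions of the maps `carpetMap r j`; the cell at `c` is
subdivided into the cells at `c + offset r (σ + 1) j`. -/
def centers (r : Fin n → ℕ) : ℕ → Set (Fin n → ℝ)
  | 0 => {0}
  | σ + 1 => ⋃ c ∈ centers r σ, ⋃ j ∈ digits r, {c + offset r (σ + 1) j}

def level (r : Fin n → ℕ) (σ : ℕ) : Set (Fin n → ℝ) := ⋃ c ∈ centers r σ, box c (radius r σ)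

section Cells

variable {r : Fin n → ℕ} {σ : ℕ} {a : ℝ} {c x : Fin n → ℝ} {j : Fin n → ℕ}

lemma mem_centers_succ {c' : Fin n → ℝ} :
    c' ∈ centers r (σ + 1) ↔ ∃ c ∈ centers r σ, ∃ j ∈ digits r, c' = c + offset r (σ + 1) j := by
  simp [centers]

lemma zero_mem_centers : (0 : Fin n → ℝ) ∈ centers r 0 := mem_singleton 0

lemma mem_level : x ∈ level r σ ↔ ∃ c ∈ centers r σ, x ∈ box c (radius r σ) := by
  simp [level]

lemma box_subset_level (hc : c ∈ centers r σ) : box c (radius r σ) ⊆ level r σ :=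
  subset_biUnion_of_mem (u := fun c => box c (radius r σ)) hc

lemma level_zero : level r 0 = closedBall 0 1 := by
  simp [level, centers, box_zero_one]

lemma sub_offset_eq (hr : ∀ i, 1 < r i) (i : Fin n) :
    x i - (c + offset r a j) i =
      ((x i - c i) / radius r a i - (2 * j i - r i - 1)) * radius r a i := by
  have := (radius_pos (hr i) a).ne'
  simp only [Pi.add_apply, offset]
  field_simp
  ring

lemma box_offset_subset (hr : ∀ i, 1 < r i) (hj : ∀ i, 1 ≤ j i ∧ j i ≤ r i) :
    box (c + offset r (a + 1) j) (radius r (a + 1)) ⊆ box c (radius r a) := by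
  intro x hx i
  have hd : |2 * (j i : ℝ) - r i - 1| ≤ r i - 1 := by
    have h₁ : (1 : ℝ) ≤ j i := by exact_mod_cast (hj i).1
    have h₂ : (j i : ℝ) ≤ r i := by exact_mod_cast (hj i).2
    rw [abs_le]; constructor <;> linarith
  have hρ := radius_pos (hr i) (a + 1)
  have hxi := hx i
  have : |x i - c i| ≤ |x i - (c + offset r (a + 1) j) i| + |offset r (a + 1) j i| :=
    (abs_add_le _ _).trans_eq' (by congr 1; simp only [Pi.add_apply]; ring)
  simp only [offset, abs_mul, abs_of_pos hρ] at this
  rw [radius_eq_mul_radius_add_one (hr i) a]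
  nlinarith

lemma level_antitone (hr : ∀ i, 1 < r i) : Antitone (level r) := by
  refine antitone_nat_of_succ_le fun σ x hx => ?_
  obtain ⟨c', hc', hx⟩ := mem_level.1 hx
  obtain ⟨c, hc, j, hj, rfl⟩ := mem_centers_succ.1 hc'
  push_cast at hx
  exact box_subset_level hc (box_offset_subset hr hj.1 hx)

lemma box_subset_closedBall (hr : ∀ i, 1 < r i) (hc : c ∈ centers r σ) :
    box c (radius r σ) ⊆ closedBall 0 1 :=
  level_zero (r := r) ▸ (box_subset_level hc).trans (level_antitone hr (Nat.zero_le σ))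

lemma one_lt_of_odd_three_le (hr : ∀ i, 3 ≤ r i ∧ Odd (r i)) (i : Fin n) : 1 < r i := by
  have := (hr i).1; omega

lemma exists_int_of_mem_centers (hr : ∀ i, 3 ≤ r i ∧ Odd (r i)) (hc : c ∈ centers r σ)
    (i : Fin n) : ∃ k : ℤ, c i = 2 * k * radius r σ i := by
  induction σ generalizing c with
  | zero => exact ⟨0, by simp_all [centers]⟩
  | succ σ ih =>
    obtain ⟨c, hc₀, j, -, rfl⟩ := mem_centers_succ.1 hc
    obtain ⟨k, hk⟩ := ih hc₀
    obtain ⟨q, hq⟩ := (hr i).2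
    refine ⟨k * r i + j i - q - 1, ?_⟩
    simp only [Pi.add_apply, offset, hk, radius_eq_mul_radius_add_one
      (one_lt_of_odd_three_le hr i) σ, hq]
    push_cast
    ring

/-- Distinct level-`σ` centres lie at least `2 * radius r σ i` apart in some coordinate. -/
lemma eq_of_mem_box_of_mem_openBox (hr : ∀ i, 3 ≤ r i ∧ Odd (r i)) {c' : Fin n → ℝ}
    (hc : c ∈ centers r σ) (hc' : c' ∈ centers r σ) (hx : x ∈ box c (radius r σ))
    (hx' : x ∈ openBox c' (radius r σ)) : c = c' := by
  funext i
  obtain ⟨k, hk⟩ := exists_int_of_mem_centers hr hc i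
  obtain ⟨k', hk'⟩ := exists_int_of_mem_centers hr hc' i
  have hρ := radius_pos (one_lt_of_odd_three_le hr i) σ
  have hlt : |c i - c' i| < 2 * radius r σ i := by
    have := hx i; have := hx' i; have := abs_sub_le (c i) (x i) (c' i)
    rw [abs_sub_comm (c i) (x i)] at this
    linarith
  rw [hk, hk', ← sub_mul, ← mul_sub, abs_mul, abs_mul, abs_two, abs_of_pos hρ] at hlt
  have : |((k - k' : ℤ) : ℝ)| < 1 := by push_cast; nlinarith
  have hkk : k = k' := by
    have : |k - k'| < 1 := by exact_mod_cast this
    rwa [Int.abs_lt_one_iff, sub_eq_zero] at this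
  rw [hk, hk', hkk]

variable (hr : ∀ i, 3 ≤ r i ∧ Odd (r i))
include hr

lemma mem_box_offset_iff :
    x ∈ box (c + offset r a j) (radius r a) ↔
      ∀ i, |(x i - c i) / radius r a i - (2 * j i - r i - 1)| ≤ 1 := by
  refine forall_congr' fun i => ?_
  have hρ := radius_pos (one_lt_of_odd_three_le hr i) a
  rw [sub_offset_eq (one_lt_of_odd_three_le hr) i, abs_mul, abs_of_pos hρ,
    mul_le_iff_le_one_left hρ]

lemma exists_subcell (hx : x ∈ box c (radius r a)) (hx' : x ∉ openBox c (radius r (a + 1))) :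
    ∃ j ∈ digits r, x ∈ box (c + offset r (a + 1) j) (radius r (a + 1)) := by
  have hρ := fun i => radius_pos (one_lt_of_odd_three_le hr i) (a + 1)
  have hv : ∀ i, |(x i - c i) / radius r (a + 1) i| ≤ r i := fun i => by
    rw [abs_div, abs_of_pos (hρ i), div_le_iff₀ (hρ i),
      ← radius_eq_mul_radius_add_one (one_lt_of_odd_three_le hr i)]
    exact hx i
  choose g hg using fun i => exists_digit (hr i).1 (hr i).2 (hv i)
  obtain ⟨i₀, hi₀⟩ : ∃ i₀, radius r (a + 1) i₀ ≤ |x i₀ - c i₀| := by simpa [openBox] using hx'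
  refine ⟨g, ⟨fun i => (hg i).1, fun hcen => (hg i₀).2.1 ?_ (congrFun hcen i₀)⟩,
    (mem_box_offset_iff hr).2 fun i => (hg i).2.2⟩
  rwa [abs_div, abs_of_pos (hρ i₀), le_div_iff₀ (hρ i₀), one_mul]

/-- Subcell offsets are even multiples of the subcell radius, so an odd multiple lands on a
face. -/
lemma exists_subcell_face (hx : x ∈ box c (radius r a)) {i : Fin n} {k : ℤ} (hk : Odd k)
    (hxi : x i - c i = k * radius r (a + 1) i) :
    ∃ j ∈ digits r, x ∈ box (c + offset r (a + 1) j) (radius r (a + 1)) ∧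
      |x i - (c + offset r (a + 1) j) i| = radius r (a + 1) i := by
  have hρ := radius_pos (one_lt_of_odd_three_le hr i) (a + 1)
  have hk₁ : (1 : ℝ) ≤ |(k : ℝ)| := by
    obtain ⟨q, rfl⟩ := hk; exact_mod_cast Int.one_le_abs (by omega)
  obtain ⟨j, hj, hxj⟩ := exists_subcell hr hx fun h => by
    have := h i
    rw [hxi, abs_mul, abs_of_pos hρ] at this
    nlinarith
  refine ⟨j, hj, hxj, ?_⟩
  have hle := (mem_box_offset_iff hr).1 hxj i
  rw [hxi, mul_div_assoc, div_self hρ.ne', mul_one] at hle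
  rw [sub_offset_eq (one_lt_of_odd_three_le hr) i, hxi, mul_div_assoc, div_self hρ.ne', mul_one,
    abs_mul, abs_of_pos hρ]
  obtain ⟨q, hq⟩ := (hr i).2
  obtain ⟨p, rfl⟩ := hk
  have : |(2 * p + 1 - (2 * j i - r i - 1) : ℤ)| ≤ 1 := by exact_mod_cast hle
  have : |(2 * p + 1 - (2 * j i - r i - 1) : ℤ)| = 1 := by
    rw [abs_le] at this; rw [abs_eq (by norm_num)]; omega
  rw [show |((2 * p + 1 : ℤ) : ℝ) - (2 * j i - r i - 1)| = 1 by exact_mod_cast this, one_mul]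

lemma mem_level_of_mem_face (hc : c ∈ centers r σ) (hx : x ∈ box c (radius r σ)) {i : Fin n}
    (hxi : |x i - c i| = radius r σ i) (τ : ℕ) : x ∈ level r τ := by
  have key : ∀ d, ∃ c ∈ centers r (σ + d), x ∈ box c (radius r ↑(σ + d)) ∧
      |x i - c i| = radius r ↑(σ + d) i := by
    intro d
    induction d with
    | zero => exact ⟨c, hc, hx, hxi⟩
    | succ d ih =>
      obtain ⟨c', hc', hx', hxi'⟩ := ih
      have hface : ∃ k : ℤ, Odd k ∧ x i - c' i = k * radius r (↑(σ + d) + 1) i := by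
        rw [radius_eq_mul_radius_add_one (one_lt_of_odd_three_le hr i)] at hxi'
        rcases abs_eq_abs.1 (hxi'.trans (abs_of_nonneg (mul_nonneg (Nat.cast_nonneg _)
          (radius_pos (one_lt_of_odd_three_le hr i) _).le)).symm) with h | h
        · exact ⟨r i, by exact_mod_cast (hr i).2, by rw [h]; push_cast; ring⟩
        · exact ⟨-r i, by simpa using (hr i).2, by rw [h]; push_cast; ring⟩
      obtain ⟨k, hk, hk'⟩ := hface
      obtain ⟨j, hj, hxj, hxij⟩ := exists_subcell_face hr hx' hk hk'
      exact ⟨c' + offset r (↑(σ + d) + 1) j, mem_centers_succ.2 ⟨c', hc', j, hj, rfl⟩,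
        by push_cast at hxj ⊢; rwa [← add_assoc], by push_cast at hxij ⊢; rwa [← add_assoc]⟩
  rcases le_total τ σ with h | h
  · exact level_antitone (one_lt_of_odd_three_le hr) h (box_subset_level hc hx)
  · obtain ⟨c', hc', hx', -⟩ := key (τ - σ)
    rw [Nat.add_sub_cancel' h] at hc' hx'
    exact box_subset_level hc' hx'

lemma mem_level_of_mem_face_openBox (hc : c ∈ centers r σ) (hx : x ∈ box c (radius r (σ + 1)))
    {i : Fin n} (hxi : |x i - c i| = radius r (σ + 1) i) (τ : ℕ) : x ∈ level r τ := by
  have hface : ∃ k : ℤ, Odd k ∧ x i - c i = k * radius r (σ + 1) i := by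
    rcases abs_eq_abs.1 (hxi.trans (abs_of_pos (radius_pos (one_lt_of_odd_three_le hr i) _)).symm)
      with h | h
    · exact ⟨1, odd_one, by rw [h]; push_cast; ring⟩
    · exact ⟨-1, by simp, by rw [h]; push_cast; ring⟩
  obtain ⟨k, hk, hk'⟩ := hface
  have hxσ : x ∈ box c (radius r σ) := fun i => (hx i).trans
    (radius_lt_radius_add_one (one_lt_of_odd_three_le hr i) σ).le
  obtain ⟨j, hj, hxj, hxij⟩ := exists_subcell_face hr hxσ hk hk'
  exact mem_level_of_mem_face hr (mem_centers_succ.2 ⟨c, hc, j, hj, rfl⟩)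
    (by push_cast; exact hxj) (by push_cast; exact hxij) τ

lemma disjoint_openBox_level_succ (hc : c ∈ centers r σ) :
    Disjoint (openBox c (radius r (σ + 1))) (level r (σ + 1)) := by
  have h1 := one_lt_of_odd_three_le hr
  refine Set.disjoint_left.2 fun x hxo hxl => ?_
  obtain ⟨c', hc', hx⟩ := mem_level.1 hxl
  obtain ⟨c₀, hc₀, j, hj, rfl⟩ := mem_centers_succ.1 hc'
  push_cast at hx
  obtain rfl : c₀ = c := eq_of_mem_box_of_mem_openBox hr hc₀ hc (box_offset_subset h1 hj.1 hx)
    fun i => (hxo i).trans (radius_lt_radius_add_one (h1 i) σ)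
  refine hj.2 (funext fun i => ?_)
  have hρ := radius_pos (h1 i) (σ + 1)
  have hin := (mem_box_offset_iff hr).1 hx i
  have hout : |(x i - c₀ i) / radius r (σ + 1) i| < 1 := by
    rw [abs_div, abs_of_pos hρ, div_lt_one hρ]; exact hxo i
  have : |(2 * j i - r i - 1 : ℤ)| < 2 := by
    have := abs_sub_abs_le_abs_sub (2 * (j i : ℝ) - r i - 1) ((x i - c₀ i) / radius r (σ + 1) i)
    rw [abs_sub_comm ((x i - c₀ i) / radius r (σ + 1) i)] at hin
    exact_mod_cast (by linarith : |(2 * (j i : ℝ) - r i - 1)| < 2)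
  obtain ⟨q, hq⟩ := (hr i).2
  rw [abs_lt] at this
  omega

lemma exists_openBox_of_mem_level (hx : x ∈ level r σ) (hx' : x ∉ level r (σ + 1)) :
    ∃ c ∈ centers r σ, x ∈ openBox c (radius r (σ + 1)) := by
  obtain ⟨c, hc, hxc⟩ := mem_level.1 hx
  by_contra! h
  obtain ⟨j, hj, hxj⟩ := exists_subcell hr hxc (h c hc)
  exact hx' (mem_level.2 ⟨_, mem_centers_succ.2 ⟨c, hc, j, hj, rfl⟩, by push_cast; exact hxj⟩)

end Cells

section Attractor

variable {r : Fin n → ℕ}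

lemma digits_finite : (digits r).Finite :=
  (Set.finite_Icc (1 : Fin n → ℕ) r).subset fun _ hj => ⟨fun i => (hj.1 i).1, fun i => (hj.1 i).2⟩

lemma centers_finite (σ : ℕ) : (centers r σ).Finite := by
  induction σ with
  | zero => exact finite_singleton 0
  | succ σ ih => exact ih.biUnion fun _ _ => digits_finite.biUnion fun _ _ => finite_singleton _

lemma isClosed_level (σ : ℕ) : IsClosed (level r σ) :=
  (centers_finite σ).isClosed_biUnion fun _ _ => isClosed_box

lemma carpetMap_zero (j : Fin n → ℕ) : carpetMap r j 0 = offset r 1 j := by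
  funext i
  simp [carpetMap, offset, radius, Real.rpow_neg_one, div_eq_mul_inv]

variable (hr : ∀ i, 1 < r i)
include hr

lemma carpetMap_bijective (j : Fin n → ℕ) : Function.Bijective (carpetMap r j) := by
  refine Function.bijective_iff_has_inverse.2
    ⟨fun y i => r i * y i - (2 * j i - r i - 1), fun x => funext fun i => ?_,
      fun y => funext fun i => ?_⟩ <;>
  · have : (r i : ℝ) ≠ 0 := by have := hr i; positivity
    simp only [carpetMap]
    field_simp
    ring

lemma image_carpetMap_box (j : Fin n → ℕ) (c ρ : Fin n → ℝ) :
    carpetMap r j '' box c ρ = box (carpetMap r j c) fun i => ρ i / r i := by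
  ext y
  obtain ⟨x, rfl⟩ := (carpetMap_bijective hr j).2 y
  rw [(carpetMap_bijective hr j).1.mem_set_image]
  refine forall_congr' fun i => ?_
  have : (0 : ℝ) < r i := by have := hr i; positivity
  rw [carpetMap, carpetMap, ← sub_div, abs_div, abs_of_pos this, div_le_div_iff_of_pos_right this]
  ring_nf

lemma carpetMap_add_offset (j j' : Fin n → ℕ) (c : Fin n → ℝ) (a : ℝ) :
    carpetMap r j (c + offset r a j') = carpetMap r j c + offset r (a + 1) j' := by
  funext i
  have : (r i : ℝ) ≠ 0 := by have := hr i; positivity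
  simp only [carpetMap, Pi.add_apply, offset, radius_eq_mul_radius_add_one (hr i) a]
  field_simp
  ring

lemma centers_succ_eq (σ : ℕ) :
    centers r (σ + 1) = ⋃ j ∈ digits r, carpetMap r j '' centers r σ := by
  induction σ with
  | zero => ext x; simp [centers, carpetMap_zero]
  | succ σ ih =>
    ext x
    constructor
    · intro hx
      obtain ⟨c', hc', j', hj', rfl⟩ := mem_centers_succ.1 hx
      rw [ih] at hc'
      simp only [mem_iUnion, mem_image, exists_prop] at hc'
      obtain ⟨j, hj, c, hc, rfl⟩ := hc'
      refine mem_biUnion hj ⟨c + offset r (σ + 1) j', mem_centers_succ.2 ⟨c, hc, j', hj', rfl⟩, ?_⟩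
      rw [carpetMap_add_offset hr]; push_cast; ring_nf
    · intro hx
      simp only [mem_iUnion, mem_image, exists_prop] at hx
      obtain ⟨j, hj, c', hc', rfl⟩ := hx
      obtain ⟨c, hc, j', hj', rfl⟩ := mem_centers_succ.1 hc'
      refine mem_centers_succ.2
        ⟨carpetMap r j c, ih ▸ mem_biUnion hj (mem_image_of_mem _ hc), j', hj', ?_⟩
      rw [carpetMap_add_offset hr]; push_cast; ring_nf

lemma level_succ_eq (σ : ℕ) : level r (σ + 1) = ⋃ j ∈ digits r, carpetMap r j '' level r σ := by
  have hrad : (fun i => radius r σ i / r i) = radius r ↑(σ + 1) := by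
    funext i
    have : (r i : ℝ) ≠ 0 := by have := hr i; positivity
    rw [radius_eq_mul_radius_add_one (hr i) σ]
    push_cast
    field_simp
  simp only [level, centers_succ_eq hr, image_iUnion₂, image_carpetMap_box hr, hrad,
    biUnion_iUnion, biUnion_image]

/-- By uniqueness: since `digits r` is finite, the intersection of the decreasing levels is again
invariant. -/
lemma eq_iInter_level {C : Set (Fin n → ℝ)} (hCne : C.Nonempty) (hCsub : C ⊆ closedBall 0 1)
    (hCattr : C = ⋃ j ∈ digits r, carpetMap r j '' C)
    (hCuniq : ∀ K : Set (Fin n → ℝ), IsCompact K → K.Nonempty →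
      K = ⋃ j ∈ digits r, carpetMap r j '' K → K = C) :
    C = ⋂ σ, level r σ := by
  have hsub : ∀ σ, C ⊆ level r σ := by
    intro σ
    induction σ with
    | zero => rwa [level_zero]
    | succ σ ih =>
      rw [hCattr, level_succ_eq hr]
      exact biUnion_mono subset_rfl fun j _ => image_mono ih
  refine (hCuniq _ ?_ (hCne.mono (subset_iInter hsub)) ?_).symm
  · exact (isCompact_closedBall 0 1).of_isClosed_subset (isClosed_iInter isClosed_level)
      (iInter_subset_of_subset 0 level_zero.le)
  have := digits_finite (r := r) |>.to_subtype
  calc ⋂ σ, level r σ = ⋂ σ, level r (σ + 1) :=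
        (iInter_mono' fun σ => ⟨σ + 1, subset_rfl⟩).antisymm
          (iInter_mono fun σ => level_antitone hr (Nat.le_succ σ))
    _ = ⋃ j : digits r, ⋂ σ, carpetMap r j '' level r σ := by
        simp only [level_succ_eq hr, biUnion_eq_iUnion]
        exact iInter_iUnion_of_antitone fun j σ τ h => image_mono (level_antitone hr h)
    _ = ⋃ j ∈ digits r, carpetMap r j '' ⋂ σ, level r σ := by
        simp only [image_iInter (carpetMap_bijective hr _), biUnion_eq_iUnion]

end Attractor

lemma connectedComponentIn_eq_of_frontier {X : Type*} [TopologicalSpace X] {U S : Set X} {x : X}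
    (hU : IsOpen U) (hU' : IsPreconnected U) (hUS : U ⊆ S) (hfr : Disjoint (frontier U) S)
    (hx : x ∈ U) : connectedComponentIn S x = U := by
  refine Subset.antisymm ?_ (hU'.subset_connectedComponentIn hx hUS)
  have hcover : S ⊆ U ∪ (closure U)ᶜ := fun y hy => by
    by_cases h : y ∈ closure U
    · exact Or.inl (by_contra fun h' => hfr.ne_of_mem ⟨h, by rwa [hU.interior_eq]⟩ hy rfl)
    · exact Or.inr h
  exact isPreconnected_connectedComponentIn.subset_left_of_subset_union hU
    isClosed_closure.isOpen_compl
    (disjoint_compl_right.mono_right (compl_subset_compl.2 subset_closure))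
    ((connectedComponentIn_subset _ _).trans hcover) ⟨x, mem_connectedComponentIn (hUS hx), hx⟩

lemma mem_unboundedGap_of_isPreconnected {C S : Set (Fin n → ℝ)} {x : Fin n → ℝ}
    (hS : IsPreconnected S) (hS' : ¬Bornology.IsBounded S) (hSC : S ⊆ Cᶜ) (hx : x ∈ S) :
    x ∈ unboundedGap C :=
  ⟨hSC hx, fun hb => hS' (hb.subset (hS.subset_connectedComponentIn hx hSC))⟩

/-- The half-space `{y | 1 < ε * y i}` with `ε = x i / |x i|` joins `x` to infinity. -/
lemma mem_unboundedGap_of_one_lt_abs {C : Set (Fin n → ℝ)} (hC : C ⊆ closedBall 0 1)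
    {x : Fin n → ℝ} {i : Fin n} (hx : 1 < |x i|) : x ∈ unboundedGap C := by
  set ε := x i / |x i|
  have hε : |ε| = 1 := by rw [abs_div, abs_abs, div_self (by positivity)]
  have hε2 : ε * ε = 1 := by rw [← abs_mul_abs_self, hε, one_mul]
  refine mem_unboundedGap_of_isPreconnected (S := {y | 1 < ε * y i}) ?_ ?_ ?_ ?_
  · refine Convex.isPreconnected fun y hy z hz a b ha hb hab => ?_
    simp only [mem_ofPred_eq, Pi.add_apply, Pi.smul_apply, smul_eq_mul] at hy hz ⊢
    rcases ha.eq_or_lt with rfl | ha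
    · simp_all
    · nlinarith
  · intro hb
    obtain ⟨R, hR⟩ := hb.exists_norm_le
    have hy : Function.update x i (ε * (|R| + 2)) ∈ {y | 1 < ε * y i} := by
      simp only [mem_ofPred_eq, Function.update_self, ← mul_assoc, hε2]
      linarith [abs_nonneg R]
    have := (norm_le_pi_norm _ i).trans (hR _ hy)
    rw [Function.update_self, Real.norm_eq_abs, abs_mul, hε, one_mul,
      abs_of_pos (by positivity)] at this
    linarith [le_abs_self R]
  · intro y hy hyC
    have hyi : |y i| ≤ 1 := by
      simpa using (norm_le_pi_norm y i).trans (mem_closedBall_zero_iff.1 (hC hyC))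
    have : ε * y i ≤ 1 := (le_abs_self _).trans (by rwa [abs_mul, hε, one_mul])
    exact this.not_gt hy
  · show 1 < ε * x i
    rwa [div_mul_eq_mul_div, ← sq, ← sq_abs, sq, mul_div_assoc, div_self (by positivity), mul_one]

section Gaps

variable {r : Fin n → ℕ} (hr : ∀ i, 3 ≤ r i ∧ Odd (r i)) {C : Set (Fin n → ℝ)}
  (hC : C = ⋂ σ, level r σ) {σ : ℕ} {c x : Fin n → ℝ}
include hr hC

omit hr in
lemma subset_closedBall_of_eq_iInter_level : C ⊆ closedBall 0 1 :=
  hC ▸ (iInter_subset _ 0).trans level_zero.le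

lemma openBox_subset_compl (hc : c ∈ centers r σ) : openBox c (radius r (σ + 1)) ⊆ Cᶜ := by
  intro x hx hxC
  rw [hC] at hxC
  exact (disjoint_openBox_level_succ hr hc).ne_of_mem hx (mem_iInter.1 hxC (σ + 1)) rfl

lemma frontier_openBox_subset (hc : c ∈ centers r σ) :
    frontier (openBox c (radius r (σ + 1))) ⊆ C := by
  have hρ := fun i => radius_pos (one_lt_of_odd_three_le hr i) (σ + 1)
  rintro x hx
  rw [frontier_openBox hρ] at hx
  obtain ⟨i, hi⟩ : ∃ i, radius r (σ + 1) i ≤ |x i - c i| := by simpa [openBox] using hx.2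
  rw [hC]
  exact mem_iInter.2 (mem_level_of_mem_face_openBox hr hc hx.1 (le_antisymm (hx.1 i) hi))

lemma connectedComponentIn_compl_eq_openBox (hc : c ∈ centers r σ)
    (hx : x ∈ openBox c (radius r (σ + 1))) :
    connectedComponentIn Cᶜ x = openBox c (radius r (σ + 1)) :=
  connectedComponentIn_eq_of_frontier isOpen_openBox isPreconnected_openBox
    (openBox_subset_compl hr hC hc)
    (Set.disjoint_left.2 fun _ hy hyC => hyC (frontier_openBox_subset hr hC hc hy)) hx

lemma isBoundedGap_openBox (hc : c ∈ centers r σ) :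
    IsBoundedGap C (openBox c (radius r (σ + 1))) := by
  have hcc := center_mem_openBox (c := c) fun i => radius_pos (one_lt_of_odd_three_le hr i) (σ + 1)
  refine ⟨⟨c, openBox_subset_compl hr hC hc hcc,
    (connectedComponentIn_compl_eq_openBox hr hC hc hcc).symm⟩,
    isBounded_closedBall.subset ((openBox_subset_box_of_le fun i =>
      (radius_lt_radius_add_one (one_lt_of_odd_three_le hr i) σ).le).trans
        (box_subset_closedBall (one_lt_of_odd_three_le hr) hc))⟩

lemma exists_openBox_of_mem_box (hc : c ∈ centers r σ) (hx : x ∈ box c (radius r σ)) (hxC : x ∉ C) :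
    ∃ τ, σ ≤ τ ∧ ∃ c' ∈ centers r τ, x ∈ openBox c' (radius r (τ + 1)) ∧ (τ = σ → c' = c) := by
  have h1 := one_lt_of_odd_three_le hr
  have hex : ∃ τ, x ∉ level r τ := by simpa [hC] using hxC
  classical
  have hσ : σ < Nat.find hex := by
    by_contra! h
    exact Nat.find_spec hex (level_antitone h1 h (box_subset_level hc hx))
  obtain ⟨τ, hτ⟩ := Nat.exists_eq_add_one_of_ne_zero (by omega : Nat.find hex ≠ 0)
  have hxτ : x ∈ level r τ := not_not.1 (Nat.find_min hex (by omega : τ < Nat.find hex))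
  obtain ⟨c', hc', hxc'⟩ := exists_openBox_of_mem_level hr hxτ (hτ ▸ Nat.find_spec hex)
  refine ⟨τ, by omega, c', hc', hxc', ?_⟩
  rintro rfl
  exact (eq_of_mem_box_of_mem_openBox hr hc hc' hx fun i =>
    (hxc' i).trans (radius_lt_radius_add_one (h1 i) τ)).symm

lemma exists_eq_openBox_of_isBoundedGap {G : Set (Fin n → ℝ)} (hG : IsBoundedGap C G) :
    ∃ σ, ∃ c ∈ centers r σ, G = openBox c (radius r (σ + 1)) := by
  obtain ⟨⟨x, hxC, rfl⟩, hb⟩ := hG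
  by_cases hx : x ∈ box 0 (radius r (0 : ℕ))
  · obtain ⟨σ, -, c, hc, hxc, -⟩ := exists_openBox_of_mem_box hr hC zero_mem_centers hx hxC
    exact ⟨σ, c, hc, connectedComponentIn_compl_eq_openBox hr hC hc hxc⟩
  · obtain ⟨i, hi⟩ : ∃ i, 1 < |x i| := by simpa [box] using hx
    exact absurd hb (mem_unboundedGap_of_one_lt_abs (subset_closedBall_of_eq_iInter_level hC) hi).2

lemma disjoint_unboundedGap_box (hc : c ∈ centers r σ) :
    Disjoint (unboundedGap C) (box c (radius r σ)) := by
  refine Set.disjoint_left.2 fun x ⟨hxC, hunb⟩ hx => hunb ?_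
  obtain ⟨τ, -, c', hc', hxc', -⟩ := exists_openBox_of_mem_box hr hC hc hx hxC
  rw [connectedComponentIn_compl_eq_openBox hr hC hc' hxc']
  exact (isBoundedGap_openBox hr hC hc').2

end Gaps

lemma logb_half_lt_one {b : ℕ} (hb : 1 < b) : Real.logb b (((b : ℝ) - 1) / 2) < 1 := by
  have hb' : (1 : ℝ) < b := by exact_mod_cast hb
  calc Real.logb b (((b : ℝ) - 1) / 2) < Real.logb b b :=
        Real.logb_lt_logb hb' (by linarith) (by linarith)
    _ = 1 := Real.logb_self_eq_one hb'

def gapDistSet (β : Fin n → ℝ) (C : Set (Fin n → ℝ)) (e : GapEnum β C) (k : ℕ) : Set ℝ :=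
  {t | 0 < t ∧ ∃ z, (affBox β (1 / t) z ∩ e.G k).Nonempty ∧
    (affBox β (1 / t) z ∩ ((⋃ i ∈ e.J ∩ Iio k, e.G i) ∪ unboundedGap C)).Nonempty}

lemma gapDist_eq_sInf {β : Fin n → ℝ} {C : Set (Fin n → ℝ)} (e : GapEnum β C) (k : ℕ) :
    gapDist β C e k = sInf (gapDistSet β C e k) := rfl

lemma gapDist_le_of_mem {β : Fin n → ℝ} {C : Set (Fin n → ℝ)} {e : GapEnum β C} {k : ℕ} {s : ℝ}
    (hs : s ∈ gapDistSet β C e k) : gapDist β C e k ≤ s := by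
  rw [gapDist_eq_sInf]
  exact csInf_le ⟨0, fun _ h => h.1.le⟩ hs

section GapDistance

variable {r : Fin n → ℕ} {C : Set (Fin n → ℝ)} {t : ℝ} {β : Fin n → ℝ} {k σ : ℕ}
  {c : Fin n → ℝ}

lemma mem_gapDistSet_of_update (hr : ∀ i, 1 < r i) (hβ : β = fun j => ((r j : ℝ)⁻¹) ^ t)
    (e : GapEnum β C) {s : ℝ} (hs : 0 < s) {i : Fin n} {a b : ℝ}
    (ha : Function.update c i a ∈ e.G k) (hb : Function.update c i b ∈ unboundedGap C)
    (hab : |a - b| ≤ 2 * radius r (t / s) i) : s ∈ gapDistSet β C e k := by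
  obtain ⟨z, haz, hbz⟩ := exists_box_mem_update (c := c)
    (fun j => (radius_pos (hr j) (t * (1 / s))).le) (by rwa [mul_one_div])
  rw [← affBox_eq_box hβ] at haz hbz
  exact ⟨hs, z, ⟨_, haz, ha⟩, ⟨_, hbz, Or.inr hb⟩⟩

/-- A box of half-width `1 - ρ / 4` joins the centre of the gap to a point beyond the face
`|x i| = 1` of `B[0,1]`. -/
lemma nonempty_gapDistSet [Nonempty (Fin n)] (hr : ∀ i, 1 < r i) (hCsub : C ⊆ closedBall 0 1)
    (ht : 0 < t) (hβ : β = fun j => ((r j : ℝ)⁻¹) ^ t) (e : GapEnum β C)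
    (hc : c ∈ centers r σ) (hG : e.G k = openBox c (radius r (σ + 1))) :
    (gapDistSet β C e k).Nonempty := by
  let i : Fin n := Classical.arbitrary _
  set ρ := radius r σ i
  have hρ : 0 < ρ := radius_pos (hr i) σ
  have hcρ : |c i| + ρ ≤ 1 := by
    simpa using abs_sub_add_le_of_box_subset (fun j => (radius_pos (hr j) σ).le)
      ((box_subset_closedBall hr hc).trans box_zero_one.ge) i
  have hr' : (1 : ℝ) < r i := by exact_mod_cast hr i
  set u := Real.logb (r i) (1 - ρ / 4)⁻¹
  have hu : 0 < u := Real.logb_pos hr'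
    ((one_lt_inv₀ (by linarith [abs_nonneg (c i)])).2 (by linarith))
  have hru : radius r u i = 1 - ρ / 4 := by
    rw [radius, Real.rpow_neg (by positivity), Real.rpow_logb (by linarith) hr'.ne'
      (by simp only [inv_pos]; linarith [abs_nonneg (c i)]), inv_inv]
  refine ⟨t / u, mem_gapDistSet_of_update hr hβ e (div_pos ht hu) (c := c) (i := i) (a := c i)
    (b := c i + 2 - ρ / 2) ?_ ?_ ?_⟩
  · rw [Function.update_eq_self, hG]
    exact center_mem_openBox fun j => radius_pos (hr j) _
  · refine mem_unboundedGap_of_one_lt_abs hCsub (i := i) ?_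
    rw [Function.update_self, lt_abs]
    left; linarith [neg_abs_le (c i)]
  · rw [div_div_cancel₀ ht.ne', hru, show c i - (c i + 2 - ρ / 2) = -(2 - ρ / 2) by ring, abs_neg,
      abs_of_pos (by linarith [abs_nonneg (c i)])]
    linarith

lemma notMem_box_of_mem_earlier [Nonempty (Fin n)] (hr : ∀ i, 3 ≤ r i ∧ Odd (r i))
    (hC : C = ⋂ σ, level r σ) (ht : 0 < t) (hβ : β = fun j => ((r j : ℝ)⁻¹) ^ t)
    (e : GapEnum β C) (hk : k ∈ e.J) (hc : c ∈ centers r σ)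
    (hG : e.G k = openBox c (radius r (σ + 1))) {y : Fin n → ℝ}
    (hy : y ∈ (⋃ l ∈ e.J ∩ Iio k, e.G l) ∪ unboundedGap C) : y ∉ box c (radius r σ) := by
  intro hyc
  rcases hy with hy | hy
  · simp only [mem_iUnion, mem_inter_iff, mem_Iio, exists_prop] at hy
    obtain ⟨l, ⟨hl, hlk⟩, hyl⟩ := hy
    obtain ⟨⟨x, -, hGl⟩, -⟩ := e.isGap l hl
    rw [hGl] at hyl
    obtain ⟨τ, hστ, c', hc', hyc', hτ⟩ :=
      exists_openBox_of_mem_box hr hC hc hyc (connectedComponentIn_subset _ _ hyl)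
    have hGl' : e.G l = openBox c' (radius r (τ + 1)) := by
      rw [hGl, connectedComponentIn_eq hyl, connectedComponentIn_compl_eq_openBox hr hC hc' hyc']
    have hsize := e.anti l hl k hk hlk.le
    have h1 := one_lt_of_odd_three_le hr
    rw [hG, hGl', sizeWrt_openBox h1 ht hβ (by positivity),
      sizeWrt_openBox h1 ht hβ (by positivity),
      div_le_div_iff_of_pos_left ht (by positivity) (by positivity)] at hsize
    obtain rfl : τ = σ := le_antisymm (by exact_mod_cast (by linarith : (τ : ℝ) ≤ σ)) hστ
    obtain rfl := hτ rfl
    exact hlk.ne (e.inj l hl k hk (hGl'.trans hG.symm))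
  · exact (disjoint_unboundedGap_box hr hC hc).ne_of_mem hy hyc rfl

lemma div_sub_le_gapDist [Nonempty (Fin n)] (hr : ∀ i, 3 ≤ r i ∧ Odd (r i))
    (hC : C = ⋂ σ, level r σ) (ht : 0 < t) (hβ : β = fun j => ((r j : ℝ)⁻¹) ^ t) {m : ℝ}
    (hm : ∀ i, m ≤ Real.logb (r i) (((r i : ℝ) - 1) / 2)) (e : GapEnum β C) (hk : k ∈ e.J)
    (hc : c ∈ centers r σ) (hG : e.G k = openBox c (radius r (σ + 1))) :
    t / (σ + 1 - m) ≤ gapDist β C e k := by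
  have h1 := one_lt_of_odd_three_le hr
  rw [gapDist_eq_sInf]
  refine le_csInf
    (nonempty_gapDistSet h1 (subset_closedBall_of_eq_iInter_level hC) ht hβ e hc hG) ?_
  rintro s ⟨hs, z, ⟨x, hxz, hxG⟩, ⟨y, hyz, hy⟩⟩
  rw [affBox_eq_box hβ] at hxz hyz
  rw [hG] at hxG
  obtain ⟨i, hi⟩ := exists_lt_two_mul_of_mem_box hxG
    (notMem_box_of_mem_earlier hr hC ht hβ e hk hc hG hy) hxz hyz
  rw [radius_sub_radius_add_one (h1 i), mul_lt_mul_iff_right₀ two_pos,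
    radius_lt_radius_iff (h1 i), mul_one_div, div_lt_iff₀ hs] at hi
  have hpos : 0 < (σ : ℝ) + 1 - m := by
    have := hm i
    nlinarith [div_pos ht hs, mul_pos ht hs]
  rw [div_le_iff₀ hpos]
  nlinarith [hm i]

/-- A box of half-width just above `(1 - 1 / r i) / 2` in direction `i` joins the central gap
of `B[0,1]` to a point beyond its face. -/
lemma gapDist_le_div (hr : ∀ i, 1 < r i) (hCsub : C ⊆ closedBall 0 1) (ht : 0 < t)
    (hβ : β = fun j => ((r j : ℝ)⁻¹) ^ t) (e : GapEnum β C)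
    (hG : e.G k = openBox 0 (radius r 1)) (i : Fin n) :
    gapDist β C e k ≤ t / (1 - Real.logb (r i) (((r i : ℝ) - 1) / 2)) := by
  set ℓ := Real.logb (r i) (((r i : ℝ) - 1) / 2)
  have hℓ : ℓ < 1 := logb_half_lt_one (hr i)
  refine le_of_forall_gt_imp_ge_of_dense fun s hs => gapDist_le_of_mem ?_
  have hs0 : 0 < s := (div_pos ht (by linarith)).trans hs
  set ρ := radius r 1 i
  set h := radius r (t / s) i
  have hρ : 0 < ρ := radius_pos (hr i) 1
  have hρ1 : ρ < 1 := by simpa using radius_lt_radius_add_one (hr i) 0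
  have hh : (1 - ρ) / 2 < h := by
    have hgap := radius_sub_radius_add_one (hr i) 0
    rw [zero_add, radius_zero] at hgap
    have : t / s < 1 - ℓ := by rwa [div_lt_iff₀ hs0, mul_comm, ← div_lt_iff₀ (by linarith)]
    have := (radius_lt_radius_iff (hr i)).2 this
    simp only [Pi.one_apply] at hgap
    linarith
  set δ := min ρ (h - (1 - ρ) / 2)
  have hδ : 0 < δ := lt_min hρ (by linarith)
  have hδρ : δ ≤ ρ := min_le_left _ _
  have hδh : δ ≤ h - (1 - ρ) / 2 := min_le_right _ _
  refine mem_gapDistSet_of_update hr hβ e hs0 (c := 0) (i := i) (a := ρ - δ) (b := 1 + δ) ?_ ?_ ?_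
  · rw [hG]
    intro j
    rcases eq_or_ne j i with rfl | hj
    · rw [Function.update_self, Pi.zero_apply, sub_zero, abs_of_nonneg (by linarith)]
      linarith
    · simp [Function.update_of_ne hj, radius_pos (hr j)]
  · refine mem_unboundedGap_of_one_lt_abs hCsub (i := i) ?_
    rw [Function.update_self, abs_of_pos (by linarith)]
    linarith
  · rw [abs_sub_comm, abs_of_pos (by linarith)]
    linarith

lemma exists_sizeWrt_eq_and_div_sub_le_gapDist [Nonempty (Fin n)] (hr : ∀ i, 3 ≤ r i ∧ Odd (r i))
    (hC : C = ⋂ σ, level r σ) (ht : 0 < t) (hβ : β = fun j => ((r j : ℝ)⁻¹) ^ t) {m : ℝ}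
    (hm : ∀ i, m ≤ Real.logb (r i) (((r i : ℝ) - 1) / 2)) (e : GapEnum β C) (hk : k ∈ e.J) :
    ∃ σ : ℕ, sizeWrt β (e.G k) = t / (σ + 1) ∧ t / (σ + 1 - m) ≤ gapDist β C e k := by
  obtain ⟨σ, c, hc, hG⟩ := exists_eq_openBox_of_isBoundedGap hr hC (e.isGap k hk)
  exact ⟨σ, hG ▸ sizeWrt_openBox (one_lt_of_odd_three_le hr) ht hβ (by positivity) c,
    div_sub_le_gapDist hr hC ht hβ hm e hk hc hG⟩

end GapDistance

lemma invE_of_pos {s : ℝ} (hs : 0 < s) : invE s = ((s⁻¹ : ℝ) : EReal) := if_neg hs.ne'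

lemma coe_le_invE_sub_invE {t m a D : ℝ} (ht : 0 < t) (ha : 0 < a) (hma : m < a)
    (hD : t / (a - m) ≤ D) : ((t⁻¹ * m : ℝ) : EReal) ≤ invE (t / a) - invE D := by
  have hD0 : 0 < D := (div_pos ht (by linarith)).trans_le hD
  rw [invE_of_pos (div_pos ht ha), invE_of_pos hD0, ← EReal.coe_sub, EReal.coe_le_coe_iff]
  have := inv_anti₀ (div_pos ht (by linarith)) hD
  rw [inv_div] at this ⊢
  have : a / t - (a - m) / t = t⁻¹ * m := by field_simp; ring
  linarith

lemma invE_sub_invE_le {t m D : ℝ} (ht : 0 < t) (hD : 0 < D) (hD' : D ≤ t / (1 - m)) :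
    invE t - invE D ≤ ((t⁻¹ * m : ℝ) : EReal) := by
  rw [invE_of_pos ht, invE_of_pos hD, ← EReal.coe_sub, EReal.coe_le_coe_iff]
  have := inv_anti₀ hD hD'
  rw [inv_div] at this
  have : t⁻¹ - (1 - m) / t = t⁻¹ * m := by field_simp; ring
  linarith

end SierpinskiCarpet

end

open SierpinskiCarpet in
theorem thickness_of_self_affine_sierpinski_carpet_general (n : ℕ)
    (r : Fin n → ℕ) (hr : ∀ i, 3 ≤ r i ∧ Odd (r i))
    (f : (Fin n → ℕ) → (Fin n → ℝ) → (Fin n → ℝ))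
    (hf : ∀ j x, f j x =
      fun i => (x i + 2 * (j i : ℝ) - (r i : ℝ) - 1) / (r i : ℝ))
    (J : Set (Fin n → ℕ))
    (hJ : J = {j | (∀ i, 1 ≤ j i ∧ j i ≤ r i) ∧ j ≠ fun i => (r i + 1) / 2})
    (C : Set (Fin n → ℝ)) (hCne : C.Nonempty)
    (hCsub : C ⊆ closedBall 0 1)
    (hCattr : C = ⋃ j ∈ J, f j '' C)
    (hCuniq : ∀ K : Set (Fin n → ℝ), IsCompact K → K.Nonempty →
      K = ⋃ j ∈ J, f j '' K → K = C)
    (t : ℝ) (ht : t ∈ Set.Ioo (0 : ℝ) 1)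
    (β : Fin n → ℝ) (hβ : β = fun j => ((r j : ℝ)⁻¹) ^ t)
    (m : ℝ)
    (hm : IsLeast (Set.range fun i => Real.logb (r i) (((r i : ℝ) - 1) / 2)) m) :
    ∀ e : GapEnum β C, thicknessA β C e = ((t⁻¹ * m : ℝ) : EReal) := by
  intro e
  obtain ⟨⟨i₀, hi₀⟩, hm⟩ := hm
  have : Nonempty (Fin n) := ⟨i₀⟩
  obtain rfl : f = carpetMap r := funext fun j => funext (hf j)
  subst hJ
  have h1 := one_lt_of_odd_three_le hr
  have hC := eq_iInter_level h1 hCne hCsub hCattr hCuniq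
  have hm1 : m < 1 := hi₀ ▸ logb_half_lt_one (h1 i₀)
  have hbounds := fun k (hk : k ∈ e.J) =>
    exists_sizeWrt_eq_and_div_sub_le_gapDist hr hC ht.1 hβ (fun i => hm ⟨i, rfl⟩) e hk
  have hpos : ∀ k ∈ e.J, 0 < gapDist β C e k := fun k hk => by
    obtain ⟨σ, -, hd⟩ := hbounds k hk
    exact (div_pos ht.1 (by linarith [σ.cast_nonneg (α := ℝ)])).trans_le hd
  obtain ⟨k₀, hk₀, hG₀⟩ := e.surj _ (isBoundedGap_openBox hr hC zero_mem_centers)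
  rw [thicknessA, if_neg (Set.nonempty_of_mem hk₀).ne_empty,
    if_neg fun ⟨k, hk, h⟩ => (hpos k hk).ne' h]
  refine le_antisymm (iInf₂_le_of_le k₀ hk₀ ?_) (le_iInf₂ fun k hk => ?_)
  · have hsize : sizeWrt β (e.G k₀) = t := by
      rw [hG₀, sizeWrt_openBox h1 ht.1 hβ (by positivity)]; simp
    rw [hsize]
    exact invE_sub_invE_le ht.1 (hpos k₀ hk₀)
      (hi₀ ▸ gapDist_le_div h1 hCsub ht.1 hβ e (by simpa using hG₀) i₀)
  · obtain ⟨σ, hs, hd⟩ := hbounds k hk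
    rw [hs]
    exact coe_le_invE_sub_invE ht.1 (by positivity) (by linarith [σ.cast_nonneg (α := ℝ)]) hd

/-- the affine thickness of the `r`-self-affine Sierpiński carpet. -/
theorem thickness_of_self_affine_sierpinski_carpet (n : ℕ) (hn : 0 < n)
    (r : Fin n → ℕ) (hr : ∀ i, 3 ≤ r i ∧ Odd (r i))
    (f : (Fin n → ℕ) → (Fin n → ℝ) → (Fin n → ℝ))
    (hf : ∀ j x, f j x =
      fun i => (x i + 2 * (j i : ℝ) - (r i : ℝ) - 1) / (r i : ℝ))
    (J : Set (Fin n → ℕ))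
    (hJ : J = {j | (∀ i, 1 ≤ j i ∧ j i ≤ r i) ∧ j ≠ fun i => (r i + 1) / 2})
    (C : Set (Fin n → ℝ)) (hC : IsCompact C) (hCne : C.Nonempty)
    (hCsub : C ⊆ closedBall 0 1)
    (hCattr : C = ⋃ j ∈ J, f j '' C)
    (hCuniq : ∀ K : Set (Fin n → ℝ), IsCompact K → K.Nonempty →
      K = ⋃ j ∈ J, f j '' K → K = C)
    (t : ℝ) (ht : t ∈ Set.Ioo (0 : ℝ) 1)
    (β : Fin n → ℝ) (hβ : β = fun j => ((r j : ℝ)⁻¹) ^ t)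
    (m : ℝ)
    (hm : IsLeast (Set.range fun i => Real.logb (r i) (((r i : ℝ) - 1) / 2)) m) :
    ∀ e : GapEnum β C, thicknessA β C e = ((t⁻¹ * m : ℝ) : EReal) :=
  thickness_of_self_affine_sierpinski_carpet_general n r hr f hf J hJ C hCne hCsub hCattr hCuniq t
    ht β hβ m hm
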